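/- arXiv:2107.06952 — 2 statements merged into one kernel-verified Lean document; each statement's English description precedes it below -/
import Mathlib

section
/- Let α := lim_{n→∞} c_n/2^n (this limit exists). Then there is a constant K > 0 such that |c_{2m+1}/2^{2m+1} − α(1 + 2^{−m})| ≤ K · 2^{−(3/2)m} for all m ≥ 4. -/
/-- The Conway number (correlation) `C(A,B)` of two head/tail strings of length `n`,
encoded as functions `Fin n → Bool` (with `H = true`, `T = false`, and 0-indexed
positions): `C(A,B) = ∑_{i=1}^n δ_i 2^{n-i}` where `δ_i = 1` iff `a_{i+j} = b_{1+j}`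
for all `j = 0,…,n-i`. -/
def conway {n : ℕ} (A B : Fin n → Bool) : ℕ :=
  ∑ i : Fin n,
    if (∀ j : Fin n, (i : ℕ) + (j : ℕ) < n → A (i + j) = B j) then 2 ^ (n - 1 - (i : ℕ)) else 0

/-- `cstar m` is the number of head/tail strings of length `m` beginning with `HT`,
ending with `TH`, whose autocorrelation is `2^{m-1} + 1`. -/
def cstar (m : ℕ) : ℕ :=
  Fintype.card {A : Fin m → Bool //
    (∀ i : Fin m, (i : ℕ) = 0 → A i = true) ∧
    (∀ i : Fin m, (i : ℕ) = 1 → A i = false) ∧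
    (∀ i : Fin m, (i : ℕ) = m - 2 → A i = false) ∧
    (∀ i : Fin m, (i : ℕ) = m - 1 → A i = true) ∧
    conway A A = 2 ^ (m - 1) + 1}

/-- `c n = 2 * cstar (n-1)`: by Csirik's characterization, the number of optimal
strategies for Player I in the Penney-Ante game with strings of length `n`. -/
def c (n : ℕ) : ℕ := 2 * cstar (n - 1)

/-!
The strings counted by `cstar m` are the strings `HT…TH` of length `m` whose only periods are `0`
and `m - 1`. A period below `m / 2` has a multiple in `[m / 2, m - 2]`, and periods that long
survive deleting or inserting the middle letter. This gives Csirik's bijections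
* `good (2k+1) ⊕ good (k+1) ≃ good (2k) × {H, T}` (delete the middle letter; `w ↦ w[:k] ++ w`),
* `good (2k-1) × {H, T} ⊕ good k ≃ good (2k)` (insert a middle letter; `w ↦ w ++ T ++ w[1:]`),
so that `s n = cstar n / 2 ^ n` satisfies `s (2k) = s (2k+1) + s (k+1) / 2 ^ k` and
`s (2k+2) = s (2k+1) + s (k+1) / 2 ^ (k+1)`. Hence consecutive terms differ by `O(2 ^ (-n/2))`,
and consecutive odd terms by `(s (m+1) - s (m+2)) / 2 ^ (m+1) = O(2 ^ (-3m/2))`. Finally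
`c (2m+1) / 2 ^ (2m+1) = s (2m) = s (2m+1) + s (m+1) / 2 ^ m`, where `s (2m+1) = α + O(2 ^ (-3m/2))`
and `s (m+1) = α + O(2 ^ (-m/2))`.
-/

namespace Penney

def HasPeriod (m p : ℕ) (f : ℕ → Bool) : Prop := ∀ i, i + p < m → f (i + p) = f i

/-- The strings counted by `cstar m` (see `cstar_eq_card`), with `H = true`. -/
structure Good (m : ℕ) (f : ℕ → Bool) : Prop where
  zero : f 0 = true
  one : f 1 = false
  sub_two : f (m - 2) = false
  sub_one : f (m - 1) = true
  not_hasPeriod : ∀ p, 1 ≤ p → p + 2 ≤ m → ¬ HasPeriod m p f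

/-- Strings of length `m` are encoded as sequences vanishing from position `m` on. -/
def Padded (m : ℕ) (f : ℕ → Bool) : Prop := ∀ i, m ≤ i → f i = false

abbrev GoodWord (m : ℕ) : Type := {f : ℕ → Bool // Padded m f ∧ Good m f}

instance (m : ℕ) : Finite (GoodWord m) := by
  refine Finite.of_injective (fun f : GoodWord m => fun i : Fin m => f.1 i) fun f g h => ?_
  refine Subtype.ext (funext fun i => ?_)
  rcases lt_or_ge i m with hi | hi
  · exact congrFun h ⟨i, hi⟩
  · rw [f.2.1 i hi, g.2.1 i hi]

lemma HasPeriod.mul {m p : ℕ} {f : ℕ → Bool} (hp : HasPeriod m p f) (t : ℕ) :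
    HasPeriod m (t * p) f := by
  induction t with
  | zero => intro i _; simp
  | succ t ih =>
    intro i hi
    rw [show i + (t + 1) * p = (i + p) + t * p by ring, ih _ (by nlinarith)]
    exact hp i (by nlinarith)

/-- A short period has a multiple in `[m / 2, m - 2]`. -/
lemma HasPeriod.exists_half_le {m p : ℕ} {f : ℕ → Bool} (hp : HasPeriod m p f) (h1 : 1 ≤ p)
    (h2 : p + 2 ≤ m) : ∃ r, m / 2 ≤ r ∧ r + 2 ≤ m ∧ HasPeriod m r f := by
  rcases le_or_gt (m / 2) p with h | h
  · exact ⟨p, h, h2, hp⟩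
  refine ⟨(m - 2) / p * p, ?_, ?_, hp.mul _⟩
  · by_contra! hlt
    have : ((m - 2) / p + 1) * p ≤ m - 2 := by
      have : (m - 2) / p * p + p ≤ m - 2 := by omega
      nlinarith
    have := (Nat.le_div_iff_mul_le (by omega)).2 this
    omega
  · have := Nat.div_mul_le_self (m - 2) p
    omega

lemma Good.of_half_le {m : ℕ} {f : ℕ → Bool} (h0 : f 0 = true) (h1 : f 1 = false)
    (h2 : f (m - 2) = false) (h3 : f (m - 1) = true)
    (hlong : ∀ r, m / 2 ≤ r → r + 2 ≤ m → ¬ HasPeriod m r f) : Good m f :=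
  ⟨h0, h1, h2, h3, fun p hp1 hp2 hp => by
    obtain ⟨r, hr1, hr2, hr⟩ := hp.exists_half_le hp1 hp2
    exact hlong r hr1 hr2 hr⟩

lemma exists_hasPeriod_of_not_good {m : ℕ} {f : ℕ → Bool} (h0 : f 0 = true) (h1 : f 1 = false)
    (h2 : f (m - 2) = false) (h3 : f (m - 1) = true) (hf : ¬ Good m f) :
    ∃ r, m / 2 ≤ r ∧ r + 2 ≤ m ∧ HasPeriod m r f := by
  by_contra! h
  exact hf (.of_half_le h0 h1 h2 h3 h)

def eraseAt (k : ℕ) (f : ℕ → Bool) : ℕ → Bool := fun i => if i < k then f i else f (i + 1)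

def insertAt (k : ℕ) (x : Bool) (f : ℕ → Bool) : ℕ → Bool :=
  fun i => if i < k then f i else if i = k then x else f (i - 1)

def truncate (m : ℕ) (f : ℕ → Bool) : ℕ → Bool := fun i => if i < m then f i else false

section Editing

variable {k i : ℕ} (x : Bool) (f : ℕ → Bool)

lemma eraseAt_of_lt (h : i < k) : eraseAt k f i = f i := if_pos h

lemma eraseAt_of_le (h : k ≤ i) : eraseAt k f i = f (i + 1) := if_neg (by omega)

lemma insertAt_of_lt (h : i < k) : insertAt k x f i = f i := if_pos h

@[simp]
lemma insertAt_self : insertAt k x f k = x := by simp [insertAt]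

lemma insertAt_of_gt (h : k < i) : insertAt k x f i = f (i - 1) := by
  simp only [insertAt]
  rw [if_neg (by omega), if_neg (by omega)]

lemma truncate_of_lt {m : ℕ} (h : i < m) : truncate m f i = f i := if_pos h

lemma padded_truncate (m : ℕ) : Padded m (truncate m f) := fun _ h => if_neg (by omega)

@[simp]
lemma eraseAt_insertAt : eraseAt k (insertAt k x f) = f := by
  funext i
  rcases lt_or_ge i k with h | h
  · rw [eraseAt_of_lt _ h, insertAt_of_lt _ _ h]
  · rw [eraseAt_of_le _ h, insertAt_of_gt _ _ (by omega), Nat.add_sub_cancel]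

@[simp]
lemma insertAt_eraseAt : insertAt k (f k) (eraseAt k f) = f := by
  funext i
  rcases lt_trichotomy i k with h | rfl | h
  · rw [insertAt_of_lt _ _ h, eraseAt_of_lt _ h]
  · rw [insertAt_self]
  · rw [insertAt_of_gt _ _ h, eraseAt_of_le _ (by omega), Nat.sub_add_cancel (by omega)]

variable {f}

lemma Padded.insertAt {n : ℕ} (hk : k ≤ n) (hf : Padded n f) : Padded (n + 1) (insertAt k x f) :=
  fun i hi => by rw [insertAt_of_gt _ _ (by omega)]; exact hf _ (by omega)

lemma Padded.mono {n m : ℕ} (hf : Padded n f) (h : n ≤ m) : Padded m f :=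
  fun i hi => hf i (h.trans hi)

lemma Padded.eraseAt {n : ℕ} (hk : k ≤ n) (hf : Padded (n + 1) f) : Padded n (eraseAt k f) :=
  fun i hi => by rw [eraseAt_of_le _ (by omega)]; exact hf _ (by omega)

end Editing

lemma Good.eraseAt_middle {k : ℕ} (hk : 2 ≤ k) {f : ℕ → Bool} (hf : Good (2 * k + 1) f) :
    Good (2 * k) (eraseAt k f) := by
  refine .of_half_le ?_ ?_ ?_ ?_ fun r hr1 hr2 hr =>
    hf.not_hasPeriod (r + 1) (by omega) (by omega) ?_
  · rw [eraseAt_of_lt _ (by omega)]; exact hf.zero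
  · rw [eraseAt_of_lt _ (by omega)]; exact hf.one
  · rw [eraseAt_of_le _ (by omega), show 2 * k - 2 + 1 = 2 * k + 1 - 2 by omega]; exact hf.sub_two
  · rw [eraseAt_of_le _ (by omega), show 2 * k - 1 + 1 = 2 * k + 1 - 1 by omega]; exact hf.sub_one
  · intro i hi
    have := hr i (by omega)
    rwa [eraseAt_of_le _ (by omega), eraseAt_of_lt _ (by omega)] at this

lemma Good.insertAt_middle {k : ℕ} (hk : 3 ≤ k) {f : ℕ → Bool} (hf : Good (2 * k - 1) f)
    (x : Bool) : Good (2 * k) (insertAt k x f) := by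
  refine .of_half_le ?_ ?_ ?_ ?_ fun r hr1 hr2 hr => ?_
  · rw [insertAt_of_lt _ _ (by omega)]; exact hf.zero
  · rw [insertAt_of_lt _ _ (by omega)]; exact hf.one
  · rw [insertAt_of_gt _ _ (by omega), show 2 * k - 2 - 1 = 2 * k - 1 - 2 by omega]
    exact hf.sub_two
  · rw [insertAt_of_gt _ _ (by omega)]; exact hf.sub_one
  have shift : ∀ i, i + r < 2 * k → i < k → k < i + r → f (i + r - 1) = f i := fun i h1 h2 h3 => by
    have := hr i h1
    rwa [insertAt_of_gt _ _ h3, insertAt_of_lt _ _ h2] at this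
  -- a period `r > k` of the insertion is a period `r - 1` of `f`; for `r = k` the letter
  -- at position `k - 1` is recovered from the last one
  refine hf.not_hasPeriod (r - 1) (by omega) (by omega) fun i hi => ?_
  rcases Nat.eq_zero_or_pos i with rfl | hi0
  · obtain rfl | hrk : r = k ∨ k < r := by omega
    · rw [zero_add, ← shift (r - 1) (by omega) (by omega) (by omega),
        show r - 1 + r - 1 = 2 * r - 1 - 1 by omega, hf.sub_one, hf.zero]
    · rw [zero_add, ← shift 0 (by omega) (by omega) (by omega), zero_add]
  · rw [← shift i (by omega) (by omega) (by omega), Nat.add_sub_assoc (by omega)]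

/-- Two copies of a string `w` of length `k + 1` overlapping in one letter. -/
def overlapSquare (k : ℕ) (w : ℕ → Bool) : ℕ → Bool :=
  fun i => if i < k then w i else if i ≤ 2 * k then w (i - k) else false

section OverlapSquare

variable {k i : ℕ} {w : ℕ → Bool}

lemma overlapSquare_of_lt (h : i < k) : overlapSquare k w i = w i := if_pos h

lemma overlapSquare_of_le (h1 : k ≤ i) (h2 : i ≤ 2 * k) : overlapSquare k w i = w (i - k) := by
  simp only [overlapSquare]; rw [if_neg (by omega), if_pos h2]

lemma overlapSquare_of_gt (h : 2 * k < i) : overlapSquare k w i = false := by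
  simp only [overlapSquare]; rw [if_neg (by omega), if_neg (by omega)]

lemma overlapSquare_self (hw : Good (k + 1) w) : overlapSquare k w k = true := by
  rw [overlapSquare_of_le le_rfl (by omega), Nat.sub_self, hw.zero]

lemma hasPeriod_overlapSquare (hw : Good (k + 1) w) :
    HasPeriod (2 * k + 1) k (overlapSquare k w) := by
  intro i hi
  rw [overlapSquare_of_le (by omega) (by omega), Nat.add_sub_cancel]
  rcases lt_or_ge i k with h | h
  · rw [overlapSquare_of_lt h]
  · obtain rfl : i = k := by omega
    rw [overlapSquare_self hw, ← hw.sub_one, Nat.add_sub_cancel]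

lemma truncate_overlapSquare (hw : Good (k + 1) w) (hwp : Padded (k + 1) w) :
    truncate (k + 1) (overlapSquare k w) = w := by
  funext i
  rcases lt_trichotomy i k with h | rfl | h
  · rw [truncate_of_lt _ (by omega), overlapSquare_of_lt h]
  · rw [truncate_of_lt _ (by omega), overlapSquare_self hw, ← hw.sub_one, Nat.add_sub_cancel]
  · rw [padded_truncate _ _ _ h, hwp _ h]

lemma insertAt_eraseAt_overlapSquare (hw : Good (k + 1) w) :
    insertAt k true (eraseAt k (overlapSquare k w)) = overlapSquare k w := by
  conv_lhs => rw [← overlapSquare_self hw]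
  exact insertAt_eraseAt _

lemma padded_eraseAt_overlapSquare : Padded (2 * k) (eraseAt k (overlapSquare k w)) :=
  fun i hi => by rw [eraseAt_of_le _ (by omega), overlapSquare_of_gt (by omega)]

lemma eraseAt_overlapSquare_of_le (h1 : k ≤ i) (h2 : i < 2 * k) :
    eraseAt k (overlapSquare k w) i = w (i + 1 - k) := by
  rw [eraseAt_of_le _ h1, overlapSquare_of_le (by omega) (by omega)]

lemma good_eraseAt_overlapSquare (hk : 2 ≤ k) (hw : Good (k + 1) w) :
    Good (2 * k) (eraseAt k (overlapSquare k w)) := by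
  have low : ∀ i, i < k → eraseAt k (overlapSquare k w) i = w i := fun i h => by
    rw [eraseAt_of_lt _ h, overlapSquare_of_lt h]
  refine .of_half_le ?_ ?_ ?_ ?_ fun r hr1 hr2 hr => ?_
  · rw [low 0 (by omega)]; exact hw.zero
  · rw [low 1 (by omega)]; exact hw.one
  · rw [eraseAt_overlapSquare_of_le (by omega) (by omega),
      show 2 * k - 2 + 1 - k = k + 1 - 2 by omega]
    exact hw.sub_two
  · rw [eraseAt_overlapSquare_of_le (by omega) (by omega),
      show 2 * k - 1 + 1 - k = k + 1 - 1 by omega]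
    exact hw.sub_one
  have shift : ∀ i, i + r < 2 * k → w (i + (r + 1 - k)) = w i := fun i hi => by
    have := hr i hi
    rwa [eraseAt_overlapSquare_of_le (by omega) hi, low i (by omega),
      show i + r + 1 - k = i + (r + 1 - k) by omega] at this
  -- for `r = k` the two overlapping copies force `w 1 = w 0`
  obtain rfl | hrk : r = k ∨ k < r := by omega
  · have := shift 0 (by omega)
    rw [show 0 + (r + 1 - r) = 1 by omega, hw.zero, hw.one] at this
    exact Bool.false_ne_true this
  · exact hw.not_hasPeriod (r + 1 - k) (by omega) (by omega) fun i hi => shift i (by omega)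

lemma Good.of_eraseAt_overlapSquare (hk : 2 ≤ k)
    (h : Good (2 * k) (eraseAt k (overlapSquare k w))) : Good (k + 1) w := by
  have low : ∀ i, i < k → eraseAt k (overlapSquare k w) i = w i := fun i h => by
    rw [eraseAt_of_lt _ h, overlapSquare_of_lt h]
  refine ⟨?_, ?_, ?_, ?_, fun r hr1 hr2 hr => ?_⟩
  · rw [← low 0 (by omega)]; exact h.zero
  · rw [← low 1 (by omega)]; exact h.one
  · rw [← h.sub_two, eraseAt_overlapSquare_of_le (by omega) (by omega)]; congr 1; omega
  · rw [← h.sub_one, eraseAt_overlapSquare_of_le (by omega) (by omega)]; congr 1; omega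
  refine h.not_hasPeriod (k + r - 1) (by omega) (by omega) fun i hi => ?_
  rw [eraseAt_overlapSquare_of_le (by omega) (by omega), low i (by omega),
    show i + (k + r - 1) + 1 - k = i + r by omega]
  exact hr i (by omega)

lemma overlapSquare_truncate_of_hasPeriod {A : ℕ → Bool} (hA : HasPeriod (2 * k + 1) k A)
    (hAp : Padded (2 * k + 1) A) : overlapSquare k (truncate (k + 1) A) = A := by
  funext i
  rcases lt_or_ge i k with h | h
  · rw [overlapSquare_of_lt h, truncate_of_lt _ (by omega)]
  rcases le_or_gt i (2 * k) with h' | h'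
  · rw [overlapSquare_of_le h h', truncate_of_lt _ (by omega), ← hA (i - k) (by omega),
      Nat.sub_add_cancel h]
  · rw [overlapSquare_of_gt h', hAp _ h']

end OverlapSquare

lemma Good.hasPeriod_insertAt {k : ℕ} (hk : 2 ≤ k) {B : ℕ → Bool} (hB : Good (2 * k) B)
    {x : Bool} (hng : ¬ Good (2 * k + 1) (insertAt k x B)) :
    HasPeriod (2 * k + 1) k (insertAt k x B) := by
  obtain ⟨r, hr1, hr2, hr⟩ := exists_hasPeriod_of_not_good
    (by rw [insertAt_of_lt _ _ (by omega)]; exact hB.zero)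
    (by rw [insertAt_of_lt _ _ (by omega)]; exact hB.one)
    (by rw [insertAt_of_gt _ _ (by omega), show 2 * k + 1 - 2 - 1 = 2 * k - 2 by omega]
        exact hB.sub_two)
    (by rw [insertAt_of_gt _ _ (by omega), show 2 * k + 1 - 1 - 1 = 2 * k - 1 by omega]
        exact hB.sub_one)
    hng
  obtain rfl | hrk : r = k ∨ k < r := by omega
  · exact hr
  refine absurd (fun i hi => ?_) (hB.not_hasPeriod (r - 1) (by omega) (by omega))
  have := hr i (by omega)
  rwa [insertAt_of_gt _ _ (by omega), insertAt_of_lt _ _ (by omega),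
    show i + r - 1 = i + (r - 1) by omega] at this

/-- The string `w₀ ⋯ w_{k-1} T w₁ ⋯ w_{k-1}` of length `2k`. -/
def joinT (k : ℕ) (w : ℕ → Bool) : ℕ → Bool :=
  fun i => if i < k then w i else if i = k then false else if i < 2 * k then w (i - k) else false

section JoinT

variable {k i : ℕ} {w : ℕ → Bool}

lemma joinT_of_lt (h : i < k) : joinT k w i = w i := if_pos h

@[simp]
lemma joinT_self : joinT k w k = false := by simp [joinT]

lemma joinT_of_gt_of_lt (h1 : k < i) (h2 : i < 2 * k) : joinT k w i = w (i - k) := by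
  simp only [joinT]; rw [if_neg (by omega), if_neg (by omega), if_pos h2]

lemma padded_joinT : Padded (2 * k) (joinT k w) := fun i h => by
  simp only [joinT]
  rw [if_neg (by omega)]
  split_ifs <;> first | rfl | omega

lemma truncate_joinT (hwp : Padded k w) : truncate k (joinT k w) = w := by
  funext i
  rcases lt_or_ge i k with h | h
  · rw [truncate_of_lt _ h, joinT_of_lt h]
  · rw [padded_truncate _ _ _ h, hwp _ h]

lemma good_joinT (hk : 3 ≤ k) (hw : Good k w) : Good (2 * k) (joinT k w) := by
  refine .of_half_le ?_ ?_ ?_ ?_ fun r hr1 hr2 hr => ?_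
  · rw [joinT_of_lt (by omega)]; exact hw.zero
  · rw [joinT_of_lt (by omega)]; exact hw.one
  · rw [joinT_of_gt_of_lt (by omega) (by omega), show 2 * k - 2 - k = k - 2 by omega]
    exact hw.sub_two
  · rw [joinT_of_gt_of_lt (by omega) (by omega), show 2 * k - 1 - k = k - 1 by omega]
    exact hw.sub_one
  obtain rfl | hrk : r = k ∨ k < r := by omega
  · have := hr 0 (by omega)
    rw [zero_add, joinT_self, joinT_of_lt (by omega), hw.zero] at this
    exact Bool.false_ne_true this
  refine hw.not_hasPeriod (r - k) (by omega) (by omega) fun i hi => ?_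
  have := hr i (by omega)
  rwa [joinT_of_gt_of_lt (by omega) (by omega), joinT_of_lt (by omega),
    show i + r - k = i + (r - k) by omega] at this

lemma Good.of_joinT (hk : 3 ≤ k) (h : Good (2 * k) (joinT k w)) : Good k w := by
  refine ⟨?_, ?_, ?_, ?_, fun r hr1 hr2 hr => ?_⟩
  · rw [← joinT_of_lt (w := w) (show 0 < k by omega)]; exact h.zero
  · rw [← joinT_of_lt (w := w) (show 1 < k by omega)]; exact h.one
  · rw [← h.sub_two, joinT_of_gt_of_lt (by omega) (by omega)]; congr 1; omega
  · rw [← h.sub_one, joinT_of_gt_of_lt (by omega) (by omega)]; congr 1; omega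
  refine h.not_hasPeriod (k + r) (by omega) (by omega) fun i hi => ?_
  rw [joinT_of_gt_of_lt (by omega) (by omega), joinT_of_lt (by omega),
    show i + (k + r) - k = i + r by omega]
  exact hr i (by omega)

lemma hasPeriod_eraseAt_joinT (hk : 3 ≤ k) (hw : Good k w) :
    HasPeriod (2 * k - 1) (k - 1) (eraseAt k (joinT k w)) := by
  intro i hi
  rw [eraseAt_of_lt (i := i) _ (by omega), joinT_of_lt (by omega)]
  rcases Nat.eq_zero_or_pos i with rfl | hi0
  · rw [zero_add, eraseAt_of_lt _ (by omega), joinT_of_lt (by omega), hw.sub_one, hw.zero]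
  · rw [eraseAt_of_le _ (by omega), joinT_of_gt_of_lt (by omega) (by omega)]
    congr 1; omega

lemma Good.hasPeriod_eraseAt (hk : 3 ≤ k) {A : ℕ → Bool} (hA : Good (2 * k) A)
    (hng : ¬ Good (2 * k - 1) (eraseAt k A)) : HasPeriod (2 * k - 1) (k - 1) (eraseAt k A) := by
  obtain ⟨r, hr1, hr2, hr⟩ := exists_hasPeriod_of_not_good
    (by rw [eraseAt_of_lt _ (by omega)]; exact hA.zero)
    (by rw [eraseAt_of_lt _ (by omega)]; exact hA.one)
    (by rw [eraseAt_of_le _ (by omega), show 2 * k - 1 - 2 + 1 = 2 * k - 2 by omega]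
        exact hA.sub_two)
    (by rw [eraseAt_of_le _ (by omega), show 2 * k - 1 - 1 + 1 = 2 * k - 1 by omega]
        exact hA.sub_one)
    hng
  obtain rfl | hrk : r = k - 1 ∨ k ≤ r := by omega
  · exact hr
  refine absurd (fun i hi => ?_) (hA.not_hasPeriod (r + 1) (by omega) (by omega))
  have := hr i (by omega)
  rwa [eraseAt_of_le _ (by omega), eraseAt_of_lt _ (by omega), add_assoc] at this

lemma joinT_truncate_of_hasPeriod (hk : 3 ≤ k) {A : ℕ → Bool} (hA : Good (2 * k) A)
    (hAp : Padded (2 * k) A) (hper : HasPeriod (2 * k - 1) (k - 1) (eraseAt k A)) :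
    joinT k (truncate k A) = A := by
  have shift : ∀ i, 1 ≤ i → i < k → A (i + k) = A i := fun i h1 h2 => by
    have := hper i (by omega)
    rwa [eraseAt_of_le _ (by omega), eraseAt_of_lt _ h2,
      show i + (k - 1) + 1 = i + k by omega] at this
  -- `A k = true` would make `k` a period of `A`
  have hAk : A k = false := by
    refine Bool.eq_false_iff.2 fun hAk => hA.not_hasPeriod k (by omega) (by omega) fun i hi => ?_
    rcases Nat.eq_zero_or_pos i with rfl | hi0
    · rw [zero_add, hAk, hA.zero]
    · exact shift i hi0 (by omega)
  funext i
  rcases lt_trichotomy i k with h | rfl | h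
  · rw [joinT_of_lt h, truncate_of_lt _ h]
  · rw [joinT_self, hAk]
  rcases lt_or_ge i (2 * k) with h' | h'
  · rw [joinT_of_gt_of_lt h h', truncate_of_lt _ (by omega), ← shift (i - k) (by omega) (by omega),
      Nat.sub_add_cancel h.le]
  · rw [padded_joinT _ h', hAp _ h']

end JoinT

lemma natCard_eq_add_of_equiv {α β γ : Type*} [Finite α] (p : α → Prop) (e₁ : {a // p a} ≃ β)
    (e₂ : {a // ¬ p a} ≃ γ) : Nat.card α = Nat.card β + Nat.card γ := by
  classical
  rw [← Nat.card_congr (Equiv.sumCompl p), Nat.card_sum, Nat.card_congr e₁, Nat.card_congr e₂]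

section Counting

variable {k : ℕ}

def insertMiddleEquiv (hk : 2 ≤ k) :
    {p : GoodWord (2 * k) × Bool // Good (2 * k + 1) (insertAt k p.2 p.1.1)} ≃
      GoodWord (2 * k + 1) where
  toFun p := ⟨insertAt k p.1.2 p.1.1.1, p.1.1.2.1.insertAt _ (by omega), p.2⟩
  invFun A := ⟨(⟨eraseAt k A.1, A.2.1.eraseAt (by omega), A.2.2.eraseAt_middle hk⟩, A.1 k),
    by simpa using A.2.2⟩
  left_inv p := Subtype.ext (Prod.ext (Subtype.ext (eraseAt_insertAt _ _)) (insertAt_self _ _))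
  right_inv A := Subtype.ext (insertAt_eraseAt _)

lemma overlapSquare_truncate_insertAt (hk : 2 ≤ k) (B : GoodWord (2 * k)) {x : Bool}
    (hng : ¬ Good (2 * k + 1) (insertAt k x B.1)) :
    overlapSquare k (truncate (k + 1) (insertAt k x B.1)) = insertAt k x B.1 :=
  overlapSquare_truncate_of_hasPeriod (B.2.2.hasPeriod_insertAt hk hng)
    (B.2.1.insertAt _ (by omega))

def overlapSquareEquiv (hk : 2 ≤ k) :
    {p : GoodWord (2 * k) × Bool // ¬ Good (2 * k + 1) (insertAt k p.2 p.1.1)} ≃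
      GoodWord (k + 1) where
  toFun p := ⟨truncate (k + 1) (insertAt k p.1.2 p.1.1.1), padded_truncate _ _,
    Good.of_eraseAt_overlapSquare hk <| by
      rw [overlapSquare_truncate_insertAt hk _ p.2, eraseAt_insertAt]; exact p.1.1.2.2⟩
  invFun w := ⟨(⟨eraseAt k (overlapSquare k w.1), padded_eraseAt_overlapSquare,
      good_eraseAt_overlapSquare hk w.2.2⟩, true), by
    rw [insertAt_eraseAt_overlapSquare w.2.2]
    exact fun h => h.not_hasPeriod k (by omega) (by omega) (hasPeriod_overlapSquare w.2.2)⟩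
  left_inv := by
    rintro ⟨⟨B, x⟩, hng⟩
    have hA := overlapSquare_truncate_insertAt hk B hng
    have hw : Good (k + 1) (truncate (k + 1) (insertAt k x B.1)) :=
      Good.of_eraseAt_overlapSquare hk (by rw [hA, eraseAt_insertAt]; exact B.2.2)
    refine Subtype.ext (Prod.ext (Subtype.ext ?_) ?_)
    · exact (congrArg (eraseAt k) hA).trans (eraseAt_insertAt _ _)
    · simpa [hA] using (overlapSquare_self hw).symm
  right_inv w := Subtype.ext <| by
    simp only
    rw [insertAt_eraseAt_overlapSquare w.2.2, truncate_overlapSquare w.2.2 w.2.1]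

def eraseMiddleEquiv (hk : 3 ≤ k) :
    {A : GoodWord (2 * k) // Good (2 * k - 1) (eraseAt k A.1)} ≃ GoodWord (2 * k - 1) × Bool where
  toFun A := (⟨eraseAt k A.1.1, (A.1.2.1.mono (by omega)).eraseAt (n := 2 * k - 1) (by omega), A.2⟩,
    A.1.1 k)
  invFun p := ⟨⟨insertAt k p.2 p.1.1, (p.1.2.1.insertAt _ (by omega)).mono (by omega),
    p.1.2.2.insertAt_middle hk _⟩, by simpa using p.1.2.2⟩
  left_inv A := Subtype.ext (Subtype.ext (insertAt_eraseAt _))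
  right_inv p := Prod.ext (Subtype.ext (eraseAt_insertAt _ _)) (insertAt_self _ _)

def joinTEquiv (hk : 3 ≤ k) :
    {A : GoodWord (2 * k) // ¬ Good (2 * k - 1) (eraseAt k A.1)} ≃ GoodWord k where
  toFun A := ⟨truncate k A.1.1, padded_truncate _ _, Good.of_joinT hk <| by
    rw [joinT_truncate_of_hasPeriod hk A.1.2.2 A.1.2.1 (A.1.2.2.hasPeriod_eraseAt hk A.2)]
    exact A.1.2.2⟩
  invFun w := ⟨⟨joinT k w.1, padded_joinT, good_joinT hk w.2.2⟩,
    fun h => h.not_hasPeriod (k - 1) (by omega) (by omega) (hasPeriod_eraseAt_joinT hk w.2.2)⟩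
  left_inv A := Subtype.ext (Subtype.ext
    (joinT_truncate_of_hasPeriod hk A.1.2.2 A.1.2.1 (A.1.2.2.hasPeriod_eraseAt hk A.2)))
  right_inv w := Subtype.ext (truncate_joinT w.2.1)

lemma card_goodWord_two_mul_add_one (hk : 2 ≤ k) :
    Nat.card (GoodWord (2 * k + 1)) + Nat.card (GoodWord (k + 1)) =
      2 * Nat.card (GoodWord (2 * k)) := by
  rw [← natCard_eq_add_of_equiv _ (insertMiddleEquiv hk) (overlapSquareEquiv hk), Nat.card_prod,
    Nat.card_eq_fintype_card (α := Bool), Fintype.card_bool, mul_comm]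

lemma card_goodWord_two_mul (hk : 3 ≤ k) :
    Nat.card (GoodWord (2 * k)) = 2 * Nat.card (GoodWord (2 * k - 1)) + Nat.card (GoodWord k) := by
  rw [natCard_eq_add_of_equiv _ (eraseMiddleEquiv hk) (joinTEquiv hk), Nat.card_prod,
    Nat.card_eq_fintype_card (α := Bool), Fintype.card_bool, mul_comm]

end Counting

def toSeq {m : ℕ} (A : Fin m → Bool) : ℕ → Bool := fun i => if h : i < m then A ⟨i, h⟩ else false

section Conway

variable {m : ℕ}

lemma toSeq_of_lt (A : Fin m → Bool) {i : ℕ} (h : i < m) : toSeq A i = A ⟨i, h⟩ := dif_pos h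

lemma padded_toSeq (A : Fin m → Bool) : Padded m (toSeq A) := fun _ h => dif_neg (by omega)

lemma forall_val_eq_imp_iff (A : Fin m → Bool) {j : ℕ} (hj : j < m) (b : Bool) :
    (∀ i : Fin m, (i : ℕ) = j → A i = b) ↔ toSeq A j = b := by
  rw [toSeq_of_lt A hj]
  exact ⟨fun h => h _ rfl, fun h i hi => by rwa [show i = ⟨j, hj⟩ from Fin.ext hi]⟩

lemma shift_eq_iff_hasPeriod (A : Fin m → Bool) (i : Fin m) :
    (∀ j : Fin m, (i : ℕ) + (j : ℕ) < m → A (i + j) = A j) ↔ HasPeriod m i (toSeq A) := by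
  have hval : ∀ j : Fin m, (i : ℕ) + j < m → ((i + j : Fin m) : ℕ) = j + i := fun j h => by
    rw [Fin.val_add, Nat.mod_eq_of_lt h, add_comm]
  constructor
  · intro h n hn
    rw [toSeq_of_lt A hn, toSeq_of_lt A (by omega), ← h ⟨n, by omega⟩ (by simp; omega)]
    exact congrArg A (Fin.ext (hval ⟨n, by omega⟩ (by simp; omega)).symm)
  · intro h j hj
    have := h j (by omega)
    rw [toSeq_of_lt A (by omega), toSeq_of_lt A j.isLt] at this
    convert this using 2
    exact Fin.ext (hval j hj)

open Classical in
lemma conway_self_eq_sum (A : Fin m → Bool) :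
    conway A A = ∑ i ∈ Finset.range m, if HasPeriod m i (toSeq A) then 2 ^ (m - 1 - i) else 0 := by
  rw [conway, ← Fin.sum_univ_eq_sum_range]
  exact Finset.sum_congr rfl fun i _ => if_congr (shift_eq_iff_hasPeriod A i) rfl rfl

/-- The shifts `0` and `m - 1` always contribute `2 ^ (m - 1) + 1`, so this value of the
autocorrelation rules out every other period. -/
lemma conway_self_eq_iff (hm : 2 ≤ m) (A : Fin m → Bool) (h0 : toSeq A 0 = true)
    (h1 : toSeq A (m - 1) = true) :
    conway A A = 2 ^ (m - 1) + 1 ↔ ∀ p, 1 ≤ p → p + 2 ≤ m → ¬ HasPeriod m p (toSeq A) := by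
  obtain ⟨n, rfl⟩ : ∃ n, m = n + 2 := ⟨m - 2, by omega⟩
  have hfirst : HasPeriod (n + 2) 0 (toSeq A) := fun _ _ => rfl
  have hlast : HasPeriod (n + 2) (n + 1) (toSeq A) := fun i hi => by
    obtain rfl : i = 0 := by omega
    rw [zero_add, show n + 1 = n + 2 - 1 by omega, h1, h0]
  rw [conway_self_eq_sum, Finset.sum_range_succ, Finset.sum_range_succ', if_pos hfirst,
    if_pos hlast]
  simp only [show n + 2 - 1 = n + 1 by omega, Nat.sub_self, pow_zero, Nat.sub_zero,
    add_assoc, add_eq_right, Finset.sum_eq_zero_iff, Finset.mem_range, ite_eq_right_iff,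
    pow_ne_zero _ two_ne_zero, imp_false]
  exact ⟨fun h p hp1 hp2 => by simpa [Nat.sub_add_cancel hp1] using h (p - 1) (by omega),
    fun h i hi => h (i + 1) (by omega) (by omega)⟩

end Conway

def paddedEquiv (m : ℕ) : (Fin m → Bool) ≃ {f : ℕ → Bool // Padded m f} where
  toFun A := ⟨toSeq A, padded_toSeq A⟩
  invFun f i := f.1 i
  left_inv A := funext fun i => toSeq_of_lt A i.isLt
  right_inv f := Subtype.ext <| funext fun i => by
    change toSeq (fun j : Fin m => f.1 j) i = f.1 i
    rcases lt_or_ge i m with h | h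
    · exact toSeq_of_lt _ h
    · rw [padded_toSeq _ _ h, f.2 _ h]

lemma cstar_eq_card {m : ℕ} (hm : 3 ≤ m) : cstar m = Nat.card (GoodWord m) := by
  rw [cstar, ← Nat.card_eq_fintype_card]
  refine Nat.card_congr (((paddedEquiv m).subtypeEquiv fun A => ?_).trans
    (Equiv.subtypeSubtypeEquivSubtypeInter (Padded m) (Good m)))
  rw [forall_val_eq_imp_iff A (show 0 < m by omega), forall_val_eq_imp_iff A (show 1 < m by omega),
    forall_val_eq_imp_iff A (show m - 2 < m by omega),
    forall_val_eq_imp_iff A (show m - 1 < m by omega)]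
  constructor
  · rintro ⟨h0, h1, h2, h3, hc⟩
    exact ⟨h0, h1, h2, h3, (conway_self_eq_iff (by omega) A h0 h3).1 hc⟩
  · rintro ⟨h0, h1, h2, h3, hp⟩
    exact ⟨h0, h1, h2, h3, (conway_self_eq_iff (by omega) A h0 h3).2 hp⟩

theorem cstar_two_mul_add_one {k : ℕ} (hk : 2 ≤ k) :
    cstar (2 * k + 1) + cstar (k + 1) = 2 * cstar (2 * k) := by
  rw [cstar_eq_card (by omega), cstar_eq_card (by omega), cstar_eq_card (by omega)]
  exact card_goodWord_two_mul_add_one hk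

theorem cstar_two_mul_add_two {k : ℕ} (hk : 2 ≤ k) :
    cstar (2 * k + 2) = 2 * cstar (2 * k + 1) + cstar (k + 1) := by
  rw [cstar_eq_card (by omega), cstar_eq_card (by omega), cstar_eq_card (by omega)]
  simpa [mul_add] using card_goodWord_two_mul (k := k + 1) (by omega)

section Asymptotics

open Filter Topology

lemma abs_sub_le_of_abs_succ_sub_le {f : ℕ → ℝ} {a C r : ℝ} {N : ℕ} (hr : r < 1)
    (hf : ∀ n, N ≤ n → |f (n + 1) - f n| ≤ C * r ^ n) (ha : Tendsto f atTop (𝓝 a))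
    {n : ℕ} (hn : N ≤ n) : |f n - a| ≤ C * r ^ n / (1 - r) := by
  have hu : ∀ j, dist (f (j + N)) (f (j + 1 + N)) ≤ C * r ^ N * r ^ j := fun j => by
    rw [Real.dist_eq, abs_sub_comm, mul_assoc, ← pow_add, add_right_comm, add_comm N]
    exact hf (j + N) (by omega)
  have key := dist_le_of_le_geometric_of_tendsto r (C * r ^ N) hr hu
    (ha.comp (tendsto_add_atTop_nat N)) (n - N)
  rwa [Nat.sub_add_cancel hn, mul_assoc, ← pow_add, Nat.add_sub_cancel' hn, Real.dist_eq] at key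

noncomputable def density (n : ℕ) : ℝ := cstar n / 2 ^ n

lemma cstar_le_two_pow (n : ℕ) : cstar n ≤ 2 ^ n :=
  (Fintype.card_subtype_le _).trans_eq (by simp)

lemma density_nonneg (n : ℕ) : 0 ≤ density n := by
  unfold density; positivity

lemma density_le_one (n : ℕ) : density n ≤ 1 := by
  rw [density, div_le_one (by positivity)]
  exact_mod_cast cstar_le_two_pow n

lemma density_two_mul {k : ℕ} (hk : 2 ≤ k) :
    density (2 * k) = density (2 * k + 1) + density (k + 1) / 2 ^ k := by
  have h : (cstar (2 * k) : ℝ) = (cstar (2 * k + 1) + cstar (k + 1)) / 2 := by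
    rw [eq_div_iff two_ne_zero, mul_comm]
    exact_mod_cast (cstar_two_mul_add_one hk).symm
  simp only [density, h]
  ring

lemma density_two_mul_add_two {k : ℕ} (hk : 2 ≤ k) :
    density (2 * k + 2) = density (2 * k + 1) + density (k + 1) / 2 ^ (k + 1) := by
  have h : (cstar (2 * k + 2) : ℝ) = 2 * cstar (2 * k + 1) + cstar (k + 1) := by
    exact_mod_cast cstar_two_mul_add_two hk
  simp only [density, h]
  ring

noncomputable def ρ : ℝ := (√2)⁻¹

lemma ρ_pos : 0 < ρ := by unfold ρ; positivity

lemma ρ_sq : ρ ^ 2 = 2⁻¹ := by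
  rw [ρ, inv_pow, Real.sq_sqrt zero_le_two]

lemma ρ_le : ρ ≤ 3 / 4 := by nlinarith [ρ_sq, ρ_pos]

lemma ρ_lt_one : ρ < 1 := ρ_le.trans_lt (by norm_num)

lemma ρ_pow_two_mul (k : ℕ) : ρ ^ (2 * k) = (2 ^ k)⁻¹ := by
  rw [pow_mul, ρ_sq, inv_pow]

lemma ρ_pow_three_le : ρ ^ 3 ≤ 2⁻¹ := by nlinarith [ρ_sq, ρ_pos, ρ_le]

lemma two_rpow_neg_three_halves_mul (m : ℕ) : (2 : ℝ) ^ (-(3 / 2 : ℝ) * m) = ρ ^ (3 * m) := by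
  rw [ρ, Real.sqrt_eq_rpow, ← Real.rpow_neg zero_le_two, ← Real.rpow_natCast,
    ← Real.rpow_mul zero_le_two]
  push_cast
  ring_nf

lemma density_div_two_pow_nonneg (j k : ℕ) : 0 ≤ density j / 2 ^ k :=
  div_nonneg (density_nonneg j) (by positivity)

lemma density_div_two_pow_le (j k : ℕ) : density j / 2 ^ k ≤ ρ ^ (2 * k) := by
  rw [ρ_pow_two_mul, div_eq_mul_inv]
  exact mul_le_of_le_one_left (by positivity) (density_le_one j)

lemma abs_density_succ_sub_le {n : ℕ} (hn : 4 ≤ n) : |density (n + 1) - density n| ≤ ρ ^ n := by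
  obtain ⟨k, rfl | rfl⟩ := Nat.even_or_odd' n
  · rw [density_two_mul (by omega), sub_add_cancel_left, abs_neg,
      abs_of_nonneg (density_div_two_pow_nonneg _ _)]
    exact density_div_two_pow_le _ _
  · rw [density_two_mul_add_two (by omega), add_sub_cancel_left,
      abs_of_nonneg (density_div_two_pow_nonneg _ _)]
    exact (density_div_two_pow_le _ _).trans (pow_le_pow_of_le_one ρ_pos.le ρ_lt_one.le (by omega))

lemma abs_density_odd_succ_sub_le {m : ℕ} (hm : 3 ≤ m) :
    |density (2 * (m + 1) + 1) - density (2 * m + 1)| ≤ ρ ^ 3 * (ρ ^ 3) ^ m := by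
  have h₁ := density_two_mul (k := m + 1) (by omega)
  have h₂ := density_two_mul_add_two (k := m) (by omega)
  rw [show 2 * (m + 1) = 2 * m + 2 by ring] at h₁
  have e : density (2 * (m + 1) + 1) - density (2 * m + 1) =
      -((density (m + 1 + 1) - density (m + 1)) * ρ ^ (2 * (m + 1))) := by
    rw [ρ_pow_two_mul, show 2 * (m + 1) + 1 = 2 * m + 3 by ring]
    linear_combination h₂ - h₁
  rw [e, abs_neg, abs_mul, abs_of_pos (pow_pos ρ_pos _), ← pow_mul, ← pow_add]
  calc _ ≤ ρ ^ (m + 1) * ρ ^ (2 * (m + 1)) :=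
        mul_le_mul_of_nonneg_right (abs_density_succ_sub_le (by omega)) (pow_pos ρ_pos _).le
    _ = ρ ^ (3 + 3 * m) := by rw [← pow_add]; ring_nf

section Limit

variable {α : ℝ} (hs : Tendsto density atTop (𝓝 α))
include hs

lemma abs_density_sub_le {n : ℕ} (hn : 4 ≤ n) : |density n - α| ≤ 4 * ρ ^ n := by
  have h := abs_sub_le_of_abs_succ_sub_le (C := 1) ρ_lt_one
    (fun j hj => (abs_density_succ_sub_le hj).trans_eq (one_mul _).symm) hs hn
  rw [one_mul, div_eq_mul_inv, mul_comm] at h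
  refine h.trans (mul_le_mul_of_nonneg_right ?_ (pow_pos ρ_pos _).le)
  rw [inv_le_comm₀ (by linarith [ρ_le]) (by norm_num)]
  linarith [ρ_le]

lemma abs_density_two_mul_add_one_sub_le {m : ℕ} (hm : 3 ≤ m) :
    |density (2 * m + 1) - α| ≤ ρ ^ (3 * m) := by
  have hodd : Tendsto (fun j => density (2 * j + 1)) atTop (𝓝 α) :=
    hs.comp (tendsto_atTop_mono (fun j => (by omega : j ≤ 2 * j + 1)) tendsto_id)
  have h := abs_sub_le_of_abs_succ_sub_le (pow_lt_one₀ ρ_pos.le ρ_lt_one three_ne_zero)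
    (fun j hj => abs_density_odd_succ_sub_le hj) hodd hm
  rw [pow_mul]
  refine h.trans ?_
  rw [mul_div_right_comm]
  refine mul_le_of_le_one_left (pow_pos (pow_pos ρ_pos 3) m).le ?_
  rw [div_le_one (by linarith [ρ_pow_three_le])]
  linarith [ρ_pow_three_le]

end Limit

lemma c_succ_div_two_pow (n : ℕ) : (c (n + 1) : ℝ) / 2 ^ (n + 1) = density n := by
  rw [c, Nat.add_sub_cancel, density, Nat.cast_mul, pow_succ]
  push_cast
  ring

end Asymptotics

end Penney

open Penney

open Filter in
/-- If `α = lim c_n / 2^n`, then `|c_{2m+1}/2^{2m+1} - α(1 + 2^{-m})| ≤ K · 2^{-(3/2)m}`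
for all `m ≥ 4`, for some constant `K > 0`. -/
theorem dn_asymptotic_odd (α : ℝ)
    (hα : Tendsto (fun n : ℕ => (c n : ℝ) / 2 ^ n) atTop (nhds α)) :
    ∃ K : ℝ, 0 < K ∧ ∀ m : ℕ, 4 ≤ m →
      |(c (2 * m + 1) : ℝ) / 2 ^ (2 * m + 1) - α * (1 + (2 : ℝ) ^ (-(m : ℝ)))| ≤
        K * (2 : ℝ) ^ (-(3 / 2 : ℝ) * (m : ℝ)) := by
  have hs : Tendsto density atTop (nhds α) :=
    (hα.comp (tendsto_add_atTop_nat 1)).congr c_succ_div_two_pow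
  refine ⟨5, by norm_num, fun m hm => ?_⟩
  have hρ : (2 : ℝ) ^ (-(m : ℝ)) = ρ ^ (2 * m) := by
    rw [ρ_pow_two_mul, Real.rpow_neg zero_le_two, Real.rpow_natCast]
  have split : (c (2 * m + 1) : ℝ) / 2 ^ (2 * m + 1) - α * (1 + (2 : ℝ) ^ (-(m : ℝ))) =
      (density (2 * m + 1) - α) + (density (m + 1) - α) * ρ ^ (2 * m) := by
    rw [c_succ_div_two_pow, density_two_mul (by omega), hρ, ρ_pow_two_mul]
    ring
  have hodd := abs_density_two_mul_add_one_sub_le hs (m := m) (by omega)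
  have hhalf := abs_density_sub_le hs (n := m + 1) (by omega)
  rw [split, two_rpow_neg_three_halves_mul]
  calc _ ≤ |density (2 * m + 1) - α| + |density (m + 1) - α| * ρ ^ (2 * m) :=
        (abs_add_le _ _).trans_eq (by rw [abs_mul, abs_of_pos (pow_pos ρ_pos _)])
    _ ≤ ρ ^ (3 * m) + 4 * ρ ^ (m + 1) * ρ ^ (2 * m) := by
        gcongr
        exact (pow_pos ρ_pos _).le
    _ = ρ ^ (3 * m) + 4 * ρ * ρ ^ (3 * m) := by ring
    _ ≤ 5 * ρ ^ (3 * m) := by nlinarith [ρ_lt_one, pow_pos ρ_pos (3 * m)]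
end

section
/- Let α := lim_{n→∞} c_n/2^n (this limit exists). Then α = 1/16 − 2·∑_{n=4}^∞ c_n/4^n, where the infinite series converges. -/
namespace PenneyAnte

/- A string of length `m` is encoded as `a : ℕ → Bool` (with `H = true`) read at positions
`< m`; `Supported m a` pins the other positions to `false`, so that the strings of length `m`
form a finite type. -/
def Supported (m : ℕ) (a : ℕ → Bool) : Prop := ∀ i, m ≤ i → a i = false

def HasBorder (m L : ℕ) (a : ℕ → Bool) : Prop := ∀ j < L, a (m - L + j) = a j

instance (m L : ℕ) (a : ℕ → Bool) : Decidable (HasBorder m L a) :=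
  inferInstanceAs (Decidable (∀ j < L, _))

def IsGoodUpTo (m K : ℕ) (a : ℕ → Bool) : Prop :=
  a 0 = true ∧ a 1 = false ∧ a (m - 2) = false ∧ a (m - 1) = true ∧
    ∀ L, 2 ≤ L → L ≤ K → ¬HasBorder m L a

/-- By `cstar_eq_goodCount`, these are the strings counted by `cstar m`: autocorrelation
`2^(m-1) + 1` says that the only borders have lengths `m` and `1`. -/
def IsGood (m : ℕ) (a : ℕ → Bool) : Prop := IsGoodUpTo m (m - 1) a

section Borders

variable {m K L : ℕ} {a : ℕ → Bool}

theorem hasBorder_self : HasBorder m m a := fun j _ => by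
  rw [Nat.sub_self, zero_add]

theorem hasBorder_one_iff : HasBorder m 1 a ↔ a (m - 1) = a 0 := by
  simp [HasBorder]

theorem HasBorder.overlap (h : HasBorder m L a) (hLm : L ≤ m) (hmL : m < 2 * L) :
    HasBorder m (2 * L - m) a := by
  intro j hj
  have e : m - (2 * L - m) + j = (m - L) + ((m - L) + j) := by omega
  rw [e, h _ (by omega), h _ (by omega)]

theorem exists_short_border (h : HasBorder m L a) (hL : 2 ≤ L) (hLm : L < m) :
    ∃ L', 2 ≤ L' ∧ 2 * L' ≤ m + 1 ∧ HasBorder m L' a := by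
  induction L using Nat.strong_induction_on with
  | _ L ih =>
    by_cases hshort : 2 * L ≤ m + 1
    · exact ⟨L, hL, hshort, h⟩
    · exact ih (2 * L - m) (by omega) (h.overlap hLm.le (by omega)) (by omega) (by omega)

theorem IsGoodUpTo.mono {K' : ℕ} (h : IsGoodUpTo m K a) (hK : K' ≤ K) : IsGoodUpTo m K' a :=
  ⟨h.1, h.2.1, h.2.2.1, h.2.2.2.1, fun L hL hLK => h.2.2.2.2 L hL (hLK.trans hK)⟩

theorem IsGoodUpTo.last_eq_first (h : IsGoodUpTo m K a) : a (m - 1) = a 0 :=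
  h.2.2.2.1.trans h.1.symm

theorem isGood_iff_isGoodUpTo (hm : m ≤ 2 * K) (hK : K < m) :
    IsGood m a ↔ IsGoodUpTo m K a := by
  refine ⟨fun h => h.mono (by omega), fun h => ⟨h.1, h.2.1, h.2.2.1, h.2.2.2.1, ?_⟩⟩
  intro L hL hLm hb
  obtain ⟨L', hL', hL'm, hb'⟩ := exists_short_border hb hL (by omega)
  exact h.2.2.2.2 L' hL' (by omega) hb'

theorem isGoodUpTo_succ_iff (hK : 1 ≤ K) :
    IsGoodUpTo m (K + 1) a ↔ IsGoodUpTo m K a ∧ ¬HasBorder m (K + 1) a := by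
  refine ⟨fun h => ⟨h.mono K.le_succ, h.2.2.2.2 _ (by omega) le_rfl⟩, fun ⟨h, hb⟩ =>
    ⟨h.1, h.2.1, h.2.2.1, h.2.2.2.1, fun L hL hLK => ?_⟩⟩
  rcases (show L ≤ K ∨ L = K + 1 by omega) with hLK | rfl
  exacts [h.2.2.2.2 L hL hLK, hb]

end Borders

def eraseAt (p : ℕ) (a : ℕ → Bool) : ℕ → Bool := fun i => if i < p then a i else a (i + 1)

def insertAt (p : ℕ) (b : Bool) (a : ℕ → Bool) : ℕ → Bool :=
  fun i => if i < p then a i else if i = p then b else a (i - 1)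

section EraseInsert

variable {m p K L : ℕ} {a w : ℕ → Bool}

theorem eraseAt_of_lt {i : ℕ} (h : i < p) : eraseAt p a i = a i := if_pos h

theorem eraseAt_of_le {i : ℕ} (h : p ≤ i) : eraseAt p a i = a (i + 1) := if_neg (by omega)

@[simp]
theorem insertAt_self (b : Bool) : insertAt p b a p = b := by simp [insertAt]

theorem insertAt_of_lt {b : Bool} {i : ℕ} (h : i < p) : insertAt p b a i = a i := if_pos h

theorem insertAt_of_gt {b : Bool} {i : ℕ} (h : p < i) : insertAt p b a i = a (i - 1) := by
  simp [insertAt, not_lt.2 h.le, h.ne']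

@[simp]
theorem eraseAt_insertAt {b : Bool} : eraseAt p (insertAt p b a) = a := by
  funext i
  unfold eraseAt insertAt
  split_ifs <;> first | rfl | omega

theorem insertAt_eraseAt {b : Bool} (h : a p = b) : insertAt p b (eraseAt p a) = a := by
  funext i
  simp only [PenneyAnte.insertAt, PenneyAnte.eraseAt]
  split_ifs <;> first | rfl | omega | (subst_vars; rfl) | (congr 1; omega)

theorem Supported.eraseAt (h : Supported (m + 1) a) (hp : p ≤ m) :
    Supported m (eraseAt p a) := fun i hi => by
  rw [eraseAt_of_le (by omega)]; exact h _ (by omega)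

theorem Supported.insertAt (h : Supported m a) (hp : p ≤ m) (b : Bool) :
    Supported (m + 1) (insertAt p b a) := fun i hi => by
  simp only [PenneyAnte.insertAt, if_neg (show ¬i < p by omega), if_neg (show i ≠ p by omega)]
  exact h _ (by omega)

theorem hasBorder_eraseAt_iff (hL : L ≤ p) (hp : p + L ≤ m) :
    HasBorder m L (eraseAt p w) ↔ HasBorder (m + 1) L w := by
  refine forall₂_congr fun j hj => ?_
  rw [eraseAt_of_le (by omega), eraseAt_of_lt (by omega),
    show m - L + j + 1 = m + 1 - L + j by omega]

theorem isGoodUpTo_eraseAt_iff (hp : 2 ≤ p) (hK : K ≤ p) (hpm : p + max K 2 ≤ m) :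
    IsGoodUpTo m K (eraseAt p w) ↔ IsGoodUpTo (m + 1) K w := by
  simp only [IsGoodUpTo, eraseAt_of_lt (show 0 < p by omega), eraseAt_of_lt (show 1 < p by omega),
    eraseAt_of_le (show p ≤ m - 2 by omega), eraseAt_of_le (show p ≤ m - 1 by omega),
    show m - 2 + 1 = m + 1 - 2 by omega, show m - 1 + 1 = m + 1 - 1 by omega]
  refine and_congr_right' <| and_congr_right' <| and_congr_right' <| and_congr_right' <|
    forall₃_congr fun L _ hLK => ?_
  rw [hasBorder_eraseAt_iff (by omega) (by omega)]

end EraseInsert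

def prependTake (k : ℕ) (z : ℕ → Bool) : ℕ → Bool :=
  fun i => if i < k then z i else z (i - k)

def dropSeq (k : ℕ) (w : ℕ → Bool) : ℕ → Bool := fun i => w (k + i)

section PrependTake

variable {k L : ℕ} {w z : ℕ → Bool}

theorem prependTake_of_lt {i : ℕ} (h : i < k) : prependTake k z i = z i := if_pos h

theorem prependTake_of_le {i : ℕ} (h : k ≤ i) : prependTake k z i = z (i - k) :=
  if_neg (by omega)

@[simp]
theorem dropSeq_prependTake : dropSeq k (prependTake k z) = z := by
  funext i
  simp [dropSeq, prependTake]

theorem prependTake_dropSeq (h : HasBorder (2 * k + 1) (k + 1) w) :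
    prependTake k (dropSeq k w) = w := by
  funext i
  rcases lt_or_ge i k with hi | hi
  · rw [prependTake_of_lt hi, dropSeq, ← h i (by omega)]
    congr 1; omega
  · rw [prependTake_of_le hi, dropSeq, Nat.add_sub_cancel' hi]

theorem Supported.prependTake (h : Supported (k + 1) z) :
    Supported (2 * k + 1) (prependTake k z) := fun i hi => by
  rw [prependTake_of_le (by omega)]; exact h _ (by omega)

theorem Supported.dropSeq (h : Supported (2 * k + 1) w) : Supported (k + 1) (dropSeq k w) :=
  fun i hi => h _ (by omega)

theorem hasBorder_prependTake_iff (hL : L ≤ k) :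
    HasBorder (2 * k + 1) L (prependTake k z) ↔ HasBorder (k + 1) L z := by
  refine forall₂_congr fun j hj => ?_
  rw [prependTake_of_le (by omega), prependTake_of_lt (by omega),
    show 2 * k + 1 - L + j - k = k + 1 - L + j by omega]

theorem hasBorder_prependTake (h : z k = z 0) :
    HasBorder (2 * k + 1) (k + 1) (prependTake k z) := by
  intro j hj
  rw [prependTake_of_le (by omega), show 2 * k + 1 - (k + 1) + j - k = j by omega]
  rcases lt_or_eq_of_le (Nat.le_of_lt_succ hj) with hj | hj
  · rw [prependTake_of_lt hj]
  · subst j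
    rw [prependTake_of_le le_rfl, Nat.sub_self, h]

theorem isGoodUpTo_prependTake_iff (hk : 2 ≤ k) :
    IsGoodUpTo (2 * k + 1) k (prependTake k z) ↔ IsGood (k + 1) z := by
  unfold IsGood IsGoodUpTo
  rw [show 2 * k + 1 - 2 = k + (k - 1) by omega, show 2 * k + 1 - 1 = k + k by omega,
    Nat.add_sub_cancel, show k + 1 - 2 = k - 1 by omega, prependTake_of_lt (show 0 < k by omega),
    prependTake_of_lt (show 1 < k by omega), prependTake_of_le (Nat.le_add_right _ _),
    prependTake_of_le (Nat.le_add_right _ _), Nat.add_sub_cancel_left, Nat.add_sub_cancel_left]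
  refine and_congr_right' <| and_congr_right' <| and_congr_right' <| and_congr_right' <|
    forall₃_congr fun L _ hLK => ?_
  rw [hasBorder_prependTake_iff hLK]

theorem hasBorder_iff_hasBorder_eraseAt (hk : 1 ≤ k) (h : w (2 * k + 1) = w 0) :
    HasBorder (2 * k + 2) (k + 1) w ↔
      HasBorder (2 * k + 1) (k + 1) (eraseAt k w) ∧ w k = w 0 := by
  simp only [HasBorder, show 2 * k + 2 - (k + 1) = k + 1 by omega,
    show 2 * k + 1 - (k + 1) = k by omega, eraseAt_of_le (Nat.le_add_right k _)]
  constructor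
  · intro hb
    refine ⟨fun j hj => ?_, by rw [← h, ← hb k (by omega)]; congr 1; omega⟩
    rcases lt_or_eq_of_le (Nat.le_of_lt_succ hj) with hj | hj
    · rw [eraseAt_of_lt hj, ← hb j (by omega)]; congr 1; omega
    · subst j
      rw [eraseAt_of_le le_rfl, show k + k + 1 = 2 * k + 1 by omega, h, ← hb 0 (by omega)]
  · rintro ⟨hb, hk0⟩ j hj
    rcases lt_or_eq_of_le (Nat.le_of_lt_succ hj) with hj | hj
    · rw [← eraseAt_of_lt (a := w) hj, ← hb j (by omega)]; congr 1; omega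
    · subst j
      rw [show k + 1 + k = 2 * k + 1 by omega, h, hk0]

end PrependTake

section Counting

instance (m : ℕ) (P : (ℕ → Bool) → Prop) : Finite {a : ℕ → Bool // Supported m a ∧ P a} :=
  Finite.of_injective (fun (a : {a // Supported m a ∧ P a}) (i : Fin m) => a.1 i)
    fun a b hab => Subtype.ext <| funext fun i => by
    rcases lt_or_ge i m with hi | hi
    · exact congrFun hab ⟨i, hi⟩
    · rw [a.2.1 i hi, b.2.1 i hi]

theorem card_supported_split (m : ℕ) (P Q : (ℕ → Bool) → Prop) :
    Nat.card {a // Supported m a ∧ P a} =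
      Nat.card {a // Supported m a ∧ P a ∧ Q a} +
        Nat.card {a // Supported m a ∧ P a ∧ ¬Q a} := by
  classical
  rw [← Nat.card_sum]
  refine Nat.card_congr
    ((Equiv.sumCompl fun a : {a // Supported m a ∧ P a} => Q a.1).symm.trans ?_)
  exact Equiv.sumCongr
    ((Equiv.subtypeSubtypeEquivSubtypeInter _ Q).trans (Equiv.subtypeEquivRight fun _ => and_assoc))
    ((Equiv.subtypeSubtypeEquivSubtypeInter _ (¬Q ·)).trans
      (Equiv.subtypeEquivRight fun _ => and_assoc))

def eraseAtEquiv {m p : ℕ} (hp : p ≤ m) (P : (ℕ → Bool) → Prop) :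
    {w // Supported (m + 1) w ∧ P (eraseAt p w)} ≃ {u // Supported m u ∧ P u} × Bool where
  toFun w := (⟨eraseAt p w, w.2.1.eraseAt hp, w.2.2⟩, w.1 p)
  invFun u := ⟨insertAt p u.2 u.1, u.1.2.1.insertAt hp _, by simpa using u.1.2.2⟩
  left_inv w := Subtype.ext (insertAt_eraseAt rfl)
  right_inv u := by ext <;> simp

theorem card_eraseAt {m p : ℕ} (hp : p ≤ m) (P : (ℕ → Bool) → Prop) :
    Nat.card {w // Supported (m + 1) w ∧ P (eraseAt p w)} =
      2 * Nat.card {u // Supported m u ∧ P u} := by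
  rw [Nat.card_congr (eraseAtEquiv hp P), Nat.card_prod, Nat.card_eq_fintype_card (α := Bool),
    Fintype.card_bool, mul_comm]

noncomputable def goodCount (m : ℕ) : ℕ := Nat.card {a // Supported m a ∧ IsGood m a}

end Counting

section Recurrences

variable {k : ℕ}

theorem isGood_insertAt_false (hk : 2 ≤ k) {u : ℕ → Bool} (hu : IsGoodUpTo (2 * k + 1) k u) :
    IsGood (2 * k + 2) (insertAt k false u) := by
  rw [isGood_iff_isGoodUpTo (K := k + 1) (by omega) (by omega), isGoodUpTo_succ_iff (by omega),
    ← isGoodUpTo_eraseAt_iff hk le_rfl (by omega), eraseAt_insertAt]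
  refine ⟨hu, fun hb => ?_⟩
  have hends : insertAt k false u (2 * k + 1) = insertAt k false u 0 := by
    rw [insertAt_of_gt (by omega), insertAt_of_lt (by omega)]
    simpa using hu.last_eq_first
  have hmid := ((hasBorder_iff_hasBorder_eraseAt (by omega) hends).1 hb).2
  rw [insertAt_self, insertAt_of_lt (by omega), hu.1] at hmid
  exact Bool.false_ne_true hmid

theorem eq_false_of_hasBorder_eraseAt (hk : 1 ≤ k) {w : ℕ → Bool} (hw : IsGood (2 * k + 2) w)
    (hb : HasBorder (2 * k + 1) (k + 1) (eraseAt k w)) : w k = false := by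
  refine Bool.eq_false_iff.2 fun hwk => hw.2.2.2.2 (k + 1) (by omega) (by omega) ?_
  have hends : w (2 * k + 1) = w 0 := by simpa using IsGoodUpTo.last_eq_first hw
  exact (hasBorder_iff_hasBorder_eraseAt hk hends).2 ⟨hb, hwk.trans hw.1.symm⟩

def borderedEquiv (hk : 2 ≤ k) :
    {u // Supported (2 * k + 1) u ∧ IsGoodUpTo (2 * k + 1) k u ∧
        HasBorder (2 * k + 1) (k + 1) u} ≃
      {z // Supported (k + 1) z ∧ IsGood (k + 1) z} where
  toFun u := ⟨dropSeq k u, u.2.1.dropSeq, by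
    rw [← isGoodUpTo_prependTake_iff hk, prependTake_dropSeq u.2.2.2]; exact u.2.2.1⟩
  invFun z := ⟨prependTake k z, z.2.1.prependTake, (isGoodUpTo_prependTake_iff hk).2 z.2.2,
    hasBorder_prependTake (by simpa using z.2.2.2.2.2.1.trans z.2.2.1.symm)⟩
  left_inv u := Subtype.ext (prependTake_dropSeq u.2.2.2)
  right_inv z := Subtype.ext dropSeq_prependTake

def borderedEraseAtEquiv (hk : 2 ≤ k) :
    {w // Supported (2 * k + 2) w ∧ IsGood (2 * k + 2) w ∧
        HasBorder (2 * k + 1) (k + 1) (eraseAt k w)} ≃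
      {u // Supported (2 * k + 1) u ∧ IsGoodUpTo (2 * k + 1) k u ∧
        HasBorder (2 * k + 1) (k + 1) u} where
  toFun w := ⟨eraseAt k w, w.2.1.eraseAt (by omega),
    (isGoodUpTo_eraseAt_iff hk le_rfl (by omega)).2 (IsGoodUpTo.mono w.2.2.1 (by omega)), w.2.2.2⟩
  invFun u := ⟨insertAt k false u, u.2.1.insertAt (by omega) _, isGood_insertAt_false hk u.2.2.1,
    by rw [eraseAt_insertAt]; exact u.2.2.2⟩
  left_inv w := Subtype.ext <| insertAt_eraseAt <|
    eq_false_of_hasBorder_eraseAt (by omega) w.2.2.1 w.2.2.2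
  right_inv u := Subtype.ext eraseAt_insertAt

theorem isGood_eraseAt_iff (hk : 2 ≤ k) {w : ℕ → Bool} :
    IsGood (2 * k + 1) (eraseAt k w) ↔
      IsGood (2 * k + 2) w ∧ ¬HasBorder (2 * k + 1) (k + 1) (eraseAt k w) := by
  rw [isGood_iff_isGoodUpTo (K := k + 1) (by omega) (by omega),
    isGood_iff_isGoodUpTo (K := k + 1) (by omega) (by omega), isGoodUpTo_succ_iff (by omega),
    isGoodUpTo_succ_iff (by omega), isGoodUpTo_eraseAt_iff hk le_rfl (by omega)]
  refine ⟨fun ⟨hw, hb⟩ => ⟨⟨hw, fun hb' => hb ?_⟩, hb⟩,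
    fun ⟨⟨hw, _⟩, hb⟩ => ⟨hw, hb⟩⟩
  have hends : w (2 * k + 1) = w 0 := by simpa using hw.last_eq_first
  exact ((hasBorder_iff_hasBorder_eraseAt (by omega) hends).1 hb').1

theorem goodCount_odd (hk : 2 ≤ k) :
    goodCount (2 * k + 1) + goodCount (k + 1) = 2 * goodCount (2 * k) := by
  calc goodCount (2 * k + 1) + goodCount (k + 1)
      = Nat.card {w // Supported (2 * k + 1) w ∧ IsGoodUpTo (2 * k + 1) k w ∧
            ¬HasBorder (2 * k + 1) (k + 1) w} +
          Nat.card {w // Supported (2 * k + 1) w ∧ IsGoodUpTo (2 * k + 1) k w ∧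
            HasBorder (2 * k + 1) (k + 1) w} := by
        rw [Nat.card_congr (borderedEquiv hk)]
        congr 1
        refine Nat.card_congr (Equiv.subtypeEquivRight fun w => and_congr_right' ?_)
        rw [isGood_iff_isGoodUpTo (K := k + 1) (by omega) (by omega),
          isGoodUpTo_succ_iff (by omega)]
    _ = Nat.card {w // Supported (2 * k + 1) w ∧ IsGood (2 * k) (eraseAt k w)} := by
        rw [add_comm, ← card_supported_split]
        refine Nat.card_congr (Equiv.subtypeEquivRight fun w => and_congr_right' ?_)
        rw [isGood_iff_isGoodUpTo (K := k) (by omega) (by omega),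
          isGoodUpTo_eraseAt_iff hk le_rfl (by omega)]
    _ = 2 * goodCount (2 * k) := card_eraseAt (by omega) _

theorem goodCount_even (hk : 2 ≤ k) :
    goodCount (2 * k + 2) = 2 * goodCount (2 * k + 1) + goodCount (k + 1) := by
  rw [goodCount, card_supported_split _ _ fun w => HasBorder (2 * k + 1) (k + 1) (eraseAt k w),
    Nat.card_congr ((borderedEraseAtEquiv hk).trans (borderedEquiv hk)), add_comm]
  congr 1
  calc Nat.card {w // Supported (2 * k + 2) w ∧ IsGood (2 * k + 2) w ∧
          ¬HasBorder (2 * k + 1) (k + 1) (eraseAt k w)}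
      = Nat.card {w // Supported (2 * k + 1 + 1) w ∧ IsGood (2 * k + 1) (eraseAt k w)} :=
        Nat.card_congr <| Equiv.subtypeEquivRight fun _ =>
          and_congr_right' (isGood_eraseAt_iff hk).symm
    _ = 2 * goodCount (2 * k + 1) := card_eraseAt (by omega) _

end Recurrences

def toSeq {m : ℕ} (A : Fin m → Bool) (i : ℕ) : Bool :=
  if h : i < m then A ⟨i, h⟩ else false

section Conway

variable {m : ℕ}

theorem toSeq_val (A : Fin m → Bool) (i : Fin m) : toSeq A i = A i := dif_pos i.isLt

def toSeqEquiv (m : ℕ) : (Fin m → Bool) ≃ {a : ℕ → Bool // Supported m a} where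
  toFun A := ⟨toSeq A, fun i hi => dif_neg (by omega)⟩
  invFun a i := a.1 i
  left_inv A := funext (toSeq_val A)
  right_inv a := Subtype.ext <| funext fun i => by
    by_cases hi : i < m
    · exact dif_pos hi
    · exact (dif_neg hi).trans (a.2 i (by omega)).symm

theorem forall_val_eq_imp_iff_toSeq (A : Fin m → Bool) {c : ℕ} (hc : c < m) (v : Bool) :
    (∀ i : Fin m, (i : ℕ) = c → A i = v) ↔ toSeq A c = v := by
  rw [toSeq, dif_pos hc]
  exact ⟨fun h => h ⟨c, hc⟩ rfl,
    fun h i hi => by rwa [show i = ⟨c, hc⟩ from Fin.ext hi]⟩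

theorem conway_term_iff (A : Fin m → Bool) (i : Fin m) :
    (∀ j : Fin m, (i : ℕ) + (j : ℕ) < m → A (i + j) = A j) ↔
      HasBorder m (m - i) (toSeq A) := by
  rw [HasBorder, Nat.sub_sub_self i.isLt.le]
  constructor
  · intro h j hj
    have := h ⟨j, by omega⟩ (by simp only; omega)
    rwa [← toSeq_val A, Fin.val_add_eq_of_add_lt (by simp only; omega), ← toSeq_val A] at this
  · intro h j hj
    rw [← toSeq_val A, Fin.val_add_eq_of_add_lt hj, ← toSeq_val A, h j (by omega)]

theorem conway_self_eq (A : Fin m → Bool) :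
    conway A A =
      ∑ i ∈ Finset.range m, if HasBorder m (m - i) (toSeq A) then 2 ^ (m - 1 - i) else 0 := by
  rw [conway, ← Fin.sum_univ_eq_sum_range]
  simp_rw [conway_term_iff]

theorem conway_self_eq_iff (hm : 2 ≤ m) (A : Fin m → Bool) (h : toSeq A (m - 1) = toSeq A 0) :
    conway A A = 2 ^ (m - 1) + 1 ↔
      ∀ L, 2 ≤ L → L ≤ m - 1 → ¬HasBorder m L (toSeq A) := by
  obtain ⟨n, rfl⟩ : ∃ n, m = n + 2 := ⟨m - 2, by omega⟩
  rw [conway_self_eq, Finset.sum_range_succ, Finset.sum_range_succ', Nat.sub_zero,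
    if_pos hasBorder_self, show n + 2 - (n + 1) = 1 by omega,
    if_pos (hasBorder_one_iff.2 h)]
  simp only [show n + 2 - 1 = n + 1 by omega, Nat.sub_zero, Nat.sub_self, pow_zero, add_assoc,
    add_eq_right, Finset.sum_eq_zero_iff, Finset.mem_range, ite_eq_right_iff,
    pow_ne_zero _ two_ne_zero, imp_false]
  refine ⟨fun hb L hL hLn => ?_, fun hb i hi => hb _ (by omega) (by omega)⟩
  simpa [show n + 2 - (n + 1 - L + 1) = L by omega] using hb (n + 1 - L) (by omega)

theorem cstar_eq_goodCount (hm : 3 ≤ m) : cstar m = goodCount m := by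
  rw [cstar, ← Nat.card_eq_fintype_card, goodCount]
  refine Nat.card_congr ((Equiv.subtypeEquiv (toSeqEquiv m) fun A => ?_).trans
    (Equiv.subtypeSubtypeEquivSubtypeInter (Supported m) (IsGood m)))
  change _ ↔ IsGoodUpTo m (m - 1) (toSeq A)
  rw [IsGoodUpTo, forall_val_eq_imp_iff_toSeq A (by omega : 0 < m),
    forall_val_eq_imp_iff_toSeq A (by omega : 1 < m),
    forall_val_eq_imp_iff_toSeq A (by omega : m - 2 < m),
    forall_val_eq_imp_iff_toSeq A (by omega : m - 1 < m)]
  exact and_congr_right fun h0 => and_congr_right' <| and_congr_right' <| and_congr_right fun h1 =>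
    conway_self_eq_iff (by omega) A (h1.trans h0.symm)

end Conway

theorem cstar_recurrence (n : ℕ) :
    cstar (2 * n + 7) + cstar (n + 4) = 4 * cstar (2 * n + 5) + 2 * cstar (n + 3) := by
  have hodd := goodCount_odd (k := n + 3) (by omega)
  have heven := goodCount_even (k := n + 2) (by omega)
  simp only [cstar_eq_goodCount (show 3 ≤ 2 * n + 7 by omega),
    cstar_eq_goodCount (show 3 ≤ n + 4 by omega), cstar_eq_goodCount (show 3 ≤ 2 * n + 5 by omega),
    cstar_eq_goodCount (show 3 ≤ n + 3 by omega)]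
  ring_nf at hodd heven ⊢
  omega

theorem c_recurrence (n : ℕ) : c (2 * n + 8) + c (n + 5) = 4 * c (2 * n + 6) + 2 * c (n + 4) := by
  simp only [c, show 2 * n + 8 - 1 = 2 * n + 7 by omega,
    show 2 * n + 6 - 1 = 2 * n + 5 by omega, show n + 5 - 1 = n + 4 by omega,
    show n + 4 - 1 = n + 3 by omega]
  linarith [cstar_recurrence n]

theorem c_succ_le (n : ℕ) : c (n + 1) ≤ 2 ^ (n + 1) := by
  have : cstar n ≤ 2 ^ n := (Fintype.card_subtype_le _).trans (by simp)
  rw [c, Nat.add_sub_cancel, pow_succ]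
  omega

theorem summable_c_div_four_pow : Summable fun n : ℕ => (c (n + 4) : ℝ) / 4 ^ (n + 4) := by
  refine Summable.of_nonneg_of_le (fun n => by positivity) (fun n => ?_)
    ((summable_nat_add_iff 4).2 summable_geometric_two)
  calc (c (n + 4) : ℝ) / 4 ^ (n + 4) ≤ 2 ^ (n + 4) / 4 ^ (n + 4) := by
        gcongr; exact_mod_cast c_succ_le (n + 3)
    _ = (1 / 2) ^ (n + 4) := by rw [← div_pow]; norm_num

theorem c_two_mul_add_eight_div (N : ℕ) :
    (c (2 * N + 8) : ℝ) / 2 ^ (2 * N + 8) = (c (2 * N + 6) : ℝ) / 2 ^ (2 * N + 6) +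
      2 * ((c (N + 4) : ℝ) / 4 ^ (N + 4)) - 4 * ((c (N + 5) : ℝ) / 4 ^ (N + 5)) := by
  have hrec : (c (2 * N + 8) : ℝ) + c (N + 5) = 4 * c (2 * N + 6) + 2 * c (N + 4) := by
    exact_mod_cast c_recurrence N
  have h6 : (2 : ℝ) ^ (2 * N + 6) = 4 ^ (N + 3) := by
    rw [show 2 * N + 6 = 2 * (N + 3) by ring, pow_mul]; norm_num
  have h8 : (2 : ℝ) ^ (2 * N + 8) = 4 ^ (N + 3) * 4 := by
    rw [show 2 * N + 8 = 2 * (N + 3) + 2 by ring, pow_add, pow_mul]; norm_num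
  have h4 : (4 : ℝ) ^ (N + 4) = 4 ^ (N + 3) * 4 := pow_succ _ _
  have h5 : (4 : ℝ) ^ (N + 5) = 4 ^ (N + 3) * 16 := by
    rw [show N + 5 = N + 3 + 2 by ring, pow_add]; norm_num
  rw [h6, h8, h4, h5]
  field_simp
  linarith

theorem c_two_mul_add_six_div (N : ℕ) :
    (c (2 * N + 6) : ℝ) / 2 ^ (2 * N + 6) =
      1 / 16 - 2 * ∑ n ∈ Finset.range N, (c (n + 4) : ℝ) / 4 ^ (n + 4) -
        4 * ((c (N + 4) : ℝ) / 4 ^ (N + 4)) := by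
  induction N with
  | zero => norm_num [show c 6 = 2 by decide, show c 4 = 2 by decide]
  | succ N ih =>
    rw [Finset.sum_range_succ, show 2 * (N + 1) + 6 = 2 * N + 8 by ring,
      c_two_mul_add_eight_div, ih]
    ring

end PenneyAnte

open Filter in
/-- If `α = lim c_n / 2^n`, then the series `∑_{n≥4} c_n/4^n` converges and
`α = 1/16 - 2 ∑_{n=4}^∞ c_n/4^n`. -/
theorem alpha_series (α : ℝ)
    (hα : Tendsto (fun n : ℕ => (c n : ℝ) / 2 ^ n) atTop (nhds α)) :
    Summable (fun n : ℕ => (c (n + 4) : ℝ) / 4 ^ (n + 4)) ∧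
      α = 1 / 16 - 2 * ∑' n : ℕ, (c (n + 4) : ℝ) / 4 ^ (n + 4) := by
  have hS := PenneyAnte.summable_c_div_four_pow
  have hsub : Tendsto (fun N : ℕ => 2 * N + 6) atTop atTop :=
    tendsto_atTop_atTop.2 fun b => ⟨b, fun N hN => by omega⟩
  refine ⟨hS, tendsto_nhds_unique (hα.comp hsub) ?_⟩
  have hlim := ((hS.hasSum.tendsto_sum_nat.const_mul 2).const_sub (1 / 16)).sub
    (hS.tendsto_atTop_zero.const_mul 4)
  rw [mul_zero, sub_zero] at hlim
  exact hlim.congr fun N => (PenneyAnte.c_two_mul_add_six_div N).symm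
end
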